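/- arXiv:1710.02637 — 8 statements merged into one kernel-verified Lean document; each statement's English description precedes it below -/
import Mathlib

section
/- Let G be a connected simple graph on n vertices in which every vertex has degree at most d (d ≥ 1), and let k be an integer with 1 ≤ k ≤ n. Then the vertex set of G can be partitioned into nonempty parts such that each part induces a connected subgraph of G, and each part has size at least k and at most (d+1)·k. In particular, the number of parts is at most n/k. -/
open SimpleGraph

lemma chain_connected {V : Type*} {G : SimpleGraph V} {S : Set V} {v0 : V} (h0 : v0 ∈ S)
    (f : V → ℕ)
    (h : ∀ u ∈ S, u ≠ v0 → ∃ w ∈ S, G.Adj u w ∧ f w < f u) :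
    (G.induce S).Connected := by
  rw [connected_iff_exists_forall_reachable]
  refine ⟨⟨v0, h0⟩, ?_⟩
  suffices H : ∀ n u (hu : u ∈ S), f u = n → (G.induce S).Reachable ⟨v0, h0⟩ ⟨u, hu⟩ by
    rintro ⟨u, hu⟩; exact H (f u) u hu rfl
  intro n
  induction n using Nat.strong_induction_on with
  | _ n IH =>
    intro u hu hn
    subst hn
    by_cases he : u = v0
    · subst he; rfl
    · obtain ⟨w, hw, hadj, hlt⟩ := h u hu he
      have hr := IH (f w) hlt w hw rfl
      refine hr.trans (Adj.reachable ?_)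
      exact hadj.symm

lemma conn_transfer {V : Type*} {G : SimpleGraph V} {A : Set V} {S : Set ↥A}
    (h : ((G.induce A).induce S).Connected) :
    (G.induce (Subtype.val '' S)).Connected := by
  refine h.map ⟨fun x => ⟨x.1.1, ⟨x.1, x.2, rfl⟩⟩, ?_⟩ ?_
  · intro a b hab
    exact hab
  · rintro ⟨v, x, hx, rfl⟩
    exact ⟨⟨x, hx⟩, rfl⟩

lemma split_lemma {V : Type*} [Fintype V] [DecidableEq V] (G : SimpleGraph V)
    (hG : G.Connected) (d k : ℕ) (hd : 1 ≤ d) (hk : 1 ≤ k)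
    (hdeg : ∀ v : V, (G.neighborSet v).ncard ≤ d)
    (hbig : d * k < Fintype.card V) :
    ∃ S : Finset V, (G.induce (S : Set V)).Connected ∧
      (G.induce ((Sᶜ : Finset V) : Set V)).Connected ∧
      k ≤ S.card ∧ S.card ≤ d * k := by
  classical
  have hne : Nonempty V := Fintype.card_pos_iff.mp (by omega)
  obtain ⟨r⟩ := hne
  have key : ∀ u : V, ∃ w : V, (u = r → w = r) ∧
      (u ≠ r → G.Adj u w ∧ G.dist r w < G.dist r u) := by
    intro u
    by_cases h : u = r
    · exact ⟨r, fun _ => rfl, fun h' => absurd h h'⟩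
    · obtain ⟨p, hp⟩ := hG.exists_walk_length_eq_dist u r
      cases p with
      | nil => exact absurd rfl h
      | @cons _ w _ hadj q =>
        refine ⟨w, fun h' => absurd h' h, fun _ => ⟨hadj, ?_⟩⟩
        have h1 : G.dist r w ≤ q.length := by
          rw [G.dist_comm]; exact SimpleGraph.dist_le q
        have h2 : G.dist r u = q.length + 1 := by
          rw [G.dist_comm]
          simpa [SimpleGraph.Walk.length_cons] using hp.symm
        omega
  choose parent hp1 hp2 using key
  have hits : ∀ u : V, ∃ n, parent^[n] u = r := by
    suffices H : ∀ m u, G.dist r u = m → ∃ n, parent^[n] u = r by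
      intro u; exact H _ u rfl
    intro m
    induction m using Nat.strong_induction_on with
    | _ m IH =>
      intro u hm
      by_cases h : u = r
      · exact ⟨0, h⟩
      · obtain ⟨hadj, hlt⟩ := hp2 u h
        obtain ⟨n, hn⟩ := IH _ (hm ▸ hlt) (parent u) rfl
        exact ⟨n + 1, by rwa [Function.iterate_succ_apply]⟩
  set desc : V → Finset V :=
    fun v => Finset.univ.filter (fun u => ∃ n, parent^[n] u = v) with hdesc
  have hmem : ∀ u v : V, u ∈ desc v ↔ ∃ n, parent^[n] u = v := by
    intro u v; simp [hdesc]
  have hself : ∀ v, v ∈ desc v := fun v => (hmem v v).mpr ⟨0, rfl⟩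
  have hdescr : desc r = Finset.univ := by
    ext u; simpa [hmem] using hits u
  have hr_not : ∀ v, v ≠ r → r ∉ desc v := by
    intro v hv hrmem
    obtain ⟨n, hn⟩ := (hmem r v).mp hrmem
    have hfix : parent^[n] r = r := Function.iterate_fixed (hp1 r rfl) n
    exact hv (hn.symm.trans hfix)
  have hparent_mem : ∀ u v, u ∈ desc v → u ≠ v → parent u ∈ desc v := by
    intro u v h1 h2
    obtain ⟨n, hn⟩ := (hmem u v).mp h1
    cases n with
    | zero => exact absurd hn h2
    | succ n =>
      exact (hmem _ _).mpr ⟨n, by rwa [Function.iterate_succ_apply] at hn⟩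
  have hchild_mem : ∀ u v, parent u ∈ desc v → u ∈ desc v := by
    intro u v h
    obtain ⟨n, hn⟩ := (hmem _ _).mp h
    exact (hmem _ _).mpr ⟨n + 1, by rwa [Function.iterate_succ_apply]⟩
  set T : Finset V := Finset.univ.filter (fun v => k ≤ (desc v).card) with hT
  have hrT : r ∈ T := by
    simp only [hT, Finset.mem_filter, Finset.mem_univ, true_and, hdescr,
      Finset.card_univ]
    nlinarith
  obtain ⟨v, hvT, hvmax⟩ := T.exists_max_image (fun v => G.dist r v) ⟨r, hrT⟩
  have hvk : k ≤ (desc v).card := by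
    simpa [hT] using hvT
  set C : Finset V := Finset.univ.filter (fun c => parent c = v ∧ c ≠ v) with hC
  have hCsub : ∀ c ∈ C, G.Adj v c ∧ G.dist r v < G.dist r c := by
    intro c hc
    simp only [hC, Finset.mem_filter, Finset.mem_univ, true_and] at hc
    obtain ⟨hpc, hcv⟩ := hc
    have hcr : c ≠ r := by
      rintro rfl
      rw [hp1 c rfl] at hpc
      exact hcv hpc
    obtain ⟨hadj, hlt⟩ := hp2 c hcr
    rw [hpc] at hadj hlt
    exact ⟨hadj.symm, hlt⟩
  have hCsmall : ∀ c ∈ C, (desc c).card ≤ k - 1 := by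
    intro c hc
    by_contra hcon
    push_neg at hcon
    have hcT : c ∈ T := by
      simp only [hT, Finset.mem_filter, Finset.mem_univ, true_and]; omega
    exact absurd (hvmax c hcT) (not_le.mpr (hCsub c hc).2)
  have hcover : desc v ⊆ insert v (C.biUnion desc) := by
    intro u hu
    by_cases h : u = v
    · simp [h]
    · obtain ⟨n, hn⟩ := (hmem u v).mp hu
      have hex : ∃ n, parent^[n] u = v := ⟨n, hn⟩
      have hmv : parent^[Nat.find hex] u = v := Nat.find_spec hex
      have hm0 : Nat.find hex ≠ 0 := by
        intro h0; rw [h0] at hmv; exact h hmv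
      obtain ⟨m', hm'⟩ := Nat.exists_eq_succ_of_ne_zero hm0
      have hpc : parent (parent^[m'] u) = v := by
        rw [← Function.iterate_succ_apply' parent m' u, ← hm']; exact hmv
      have hcv : parent^[m'] u ≠ v := fun hcveq =>
        Nat.find_min hex (by omega) hcveq
      have hcC : parent^[m'] u ∈ C := by
        simp only [hC, Finset.mem_filter, Finset.mem_univ, true_and]
        exact ⟨hpc, hcv⟩
      have hudc : u ∈ desc (parent^[m'] u) := (hmem _ _).mpr ⟨m', rfl⟩
      exact Finset.mem_insert_of_mem (Finset.mem_biUnion.mpr ⟨_, hcC, hudc⟩)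
  have hcard_le : (desc v).card ≤ 1 + C.card * (k - 1) := by
    calc (desc v).card ≤ (insert v (C.biUnion desc)).card :=
          Finset.card_le_card hcover
      _ ≤ (C.biUnion desc).card + 1 := Finset.card_insert_le _ _
      _ ≤ (∑ c ∈ C, (desc c).card) + 1 :=
          Nat.add_le_add_right (Finset.card_biUnion_le) 1
      _ ≤ C.card * (k - 1) + 1 := by
          refine Nat.add_le_add_right ?_ 1
          exact Finset.sum_le_card_nsmul C _ (k - 1) (fun c hc => hCsmall c hc)
      _ = 1 + C.card * (k - 1) := by omega
  have hCdeg : C.card ≤ d := by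
    have hsub : (↑C : Set V) ⊆ G.neighborSet v := by
      intro c hc
      exact (hCsub c hc).1
    calc C.card = (↑C : Set V).ncard := (Set.ncard_coe_finset C).symm
      _ ≤ (G.neighborSet v).ncard := Set.ncard_le_ncard hsub (Set.toFinite _)
      _ ≤ d := hdeg v
  have hvr : v ≠ r := by
    rintro rfl
    have h1 : Fintype.card V ≤ 1 + C.card * (k - 1) := by
      rw [← Finset.card_univ, ← hdescr]; exact hcard_le
    have h2 : C.card * (k - 1) ≤ d * (k - 1) := Nat.mul_le_mul_right _ hCdeg
    have h3 : d * (k - 1) + d = d * k := by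
      rw [← Nat.mul_succ]; congr 1; omega
    omega
  have hPnotC : parent v ∉ C := by
    intro hmemC
    simp only [hC, Finset.mem_filter, Finset.mem_univ, true_and] at hmemC
    obtain ⟨hpp, hpv⟩ := hmemC
    by_cases hpr : parent v = r
    · rw [hpr, hp1 r rfl] at hpp
      exact hvr hpp.symm
    · obtain ⟨_, h2'⟩ := hp2 (parent v) hpr
      obtain ⟨_, h3'⟩ := hp2 v hvr
      rw [hpp] at h2'
      omega
  have hCdeg' : C.card ≤ d - 1 := by
    have hsub : (↑(insert (parent v) C) : Set V) ⊆ G.neighborSet v := by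
      intro c hc
      rw [Finset.coe_insert, Set.mem_insert_iff] at hc
      rcases hc with rfl | hc
      · exact (hp2 v hvr).1
      · exact (hCsub c hc).1
    have h1 : (insert (parent v) C).card = C.card + 1 :=
      Finset.card_insert_of_notMem hPnotC
    have h2 : (insert (parent v) C).card ≤ d := by
      calc (insert (parent v) C).card = (↑(insert (parent v) C) : Set V).ncard :=
            (Set.ncard_coe_finset _).symm
        _ ≤ (G.neighborSet v).ncard := Set.ncard_le_ncard hsub (Set.toFinite _)
        _ ≤ d := hdeg v
    omega
  have hsize : (desc v).card ≤ d * k := by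
    have h2 : C.card * (k - 1) ≤ (d - 1) * (k - 1) := Nat.mul_le_mul_right _ hCdeg'
    have h3 : (d - 1) * (k - 1) + (d - 1) + (k - 1) + 1 = d * k := by
      obtain ⟨d', rfl⟩ : ∃ d', d = d' + 1 := ⟨d - 1, by omega⟩
      obtain ⟨k', rfl⟩ : ∃ k', k = k' + 1 := ⟨k - 1, by omega⟩
      simp only [Nat.add_sub_cancel]
      ring
    omega
  have hur_ne : ∀ u, u ∈ desc v → u ≠ r := by
    rintro u hu rfl
    exact hr_not v hvr hu
  refine ⟨desc v, ?_, ?_, hvk, hsize⟩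
  · apply chain_connected (S := (↑(desc v) : Set V)) (v0 := v)
      (Finset.mem_coe.mpr (hself v)) (fun u => G.dist r u)
    intro u hu hne'
    rw [Finset.mem_coe] at hu
    have hur : u ≠ r := hur_ne u hu
    exact ⟨parent u, Finset.mem_coe.mpr (hparent_mem u v hu hne'),
      (hp2 u hur).1, (hp2 u hur).2⟩
  · have hrc : r ∈ (desc v)ᶜ := Finset.mem_compl.mpr (hr_not v hvr)
    apply chain_connected (S := (↑((desc v)ᶜ) : Set V)) (v0 := r)
      (Finset.mem_coe.mpr hrc) (fun u => G.dist r u)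
    intro u hu hne'
    rw [Finset.mem_coe, Finset.mem_compl] at hu
    refine ⟨parent u, ?_, (hp2 u hne').1, (hp2 u hne').2⟩
    rw [Finset.mem_coe, Finset.mem_compl]
    intro hmem'
    exact hu (hchild_mem u v hmem')

lemma induce_deg {V : Type*} [Fintype V] {G : SimpleGraph V} {A : Set V} (u : ↥A) :
    ((G.induce A).neighborSet u).ncard ≤ (G.neighborSet (u : V)).ncard := by
  have h1 : Subtype.val '' ((G.induce A).neighborSet u) ⊆ G.neighborSet (u : V) := by
    rintro w ⟨w', hw', rfl⟩
    exact hw'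
  calc ((G.induce A).neighborSet u).ncard
      = (Subtype.val '' ((G.induce A).neighborSet u)).ncard :=
        (Set.ncard_image_of_injective _ Subtype.val_injective).symm
    _ ≤ _ := Set.ncard_le_ncard h1 (Set.toFinite _)

lemma main_lemma {V : Type*} [Fintype V] [DecidableEq V] (G : SimpleGraph V)
    (d k : ℕ) (hd : 1 ≤ d) (hk : 1 ≤ k)
    (hdeg : ∀ v : V, (G.neighborSet v).ncard ≤ d) :
    ∀ N (A : Finset V), A.card ≤ N → (G.induce (A : Set V)).Connected → k ≤ A.card →
    ∃ P : Finset (Finset V),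
      (∀ p ∈ P, p.Nonempty ∧ p ⊆ A ∧ (G.induce (p : Set V)).Connected ∧
        k ≤ p.card ∧ p.card ≤ (d + 1) * k) ∧
      (∀ v ∈ A, ∃! p, p ∈ P ∧ v ∈ p) := by
  intro N
  induction N with
  | zero => intro A hA _ hkA; omega
  | succ N IH =>
    intro A hA hconn hkA
    by_cases hle : A.card ≤ (d + 1) * k
    · refine ⟨{A}, ?_, ?_⟩
      · intro p hp; rw [Finset.mem_singleton] at hp; subst hp
        exact ⟨Finset.card_pos.mp (by omega), subset_rfl, hconn, hkA, hle⟩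
      · intro v hv
        exact ⟨A, ⟨Finset.mem_singleton_self A, hv⟩, by rintro p ⟨hp, _⟩; simpa using hp⟩
    · push_neg at hle
      have hcardA : Fintype.card (A : Set V) = A.card := Fintype.card_coe A
      have hdeg' : ∀ u : (A : Set V), ((G.induce (A : Set V)).neighborSet u).ncard ≤ d :=
        fun u => le_trans (induce_deg u) (hdeg u)
      have hdk : (d + 1) * k = d * k + k := by ring
      have hbig : d * k < Fintype.card (A : Set V) := by
        rw [hcardA]; omega
      obtain ⟨S, hS1, hS2, hS3, hS4⟩ :=
        split_lemma (G.induce (A : Set V)) hconn d k hd hk hdeg' hbig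
      set B : Finset V := S.map (Function.Embedding.subtype _) with hB
      have hBA : B ⊆ A := by
        intro b hb
        rw [hB, Finset.mem_map] at hb
        obtain ⟨y, _, rfl⟩ := hb
        exact y.2
      have hBcard : B.card = S.card := Finset.card_map _
      have hBcoe : (B : Set V) = Subtype.val '' (S : Set (A : Set V)) := by
        rw [hB, Finset.coe_map]; rfl
      have hBconn : (G.induce (B : Set V)).Connected := by
        rw [hBcoe]; exact conn_transfer hS1
      have hcompl : Subtype.val '' ((Sᶜ : Finset (A : Set V)) : Set (A : Set V)) =
          (A : Set V) \ (B : Set V) := by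
        ext x
        constructor
        · rintro ⟨x', hx', rfl⟩
          rw [Finset.mem_coe, Finset.mem_compl] at hx'
          refine ⟨x'.2, ?_⟩
          intro hxB
          rw [Finset.mem_coe, hB, Finset.mem_map] at hxB
          obtain ⟨y, hy, hyx⟩ := hxB
          apply hx'
          have : y = x' := Subtype.val_injective hyx
          rwa [this] at hy
        · rintro ⟨hxA, hxB⟩
          refine ⟨⟨x, hxA⟩, ?_, rfl⟩
          rw [Finset.mem_coe, Finset.mem_compl]
          intro hS
          exact hxB (by rw [Finset.mem_coe, hB, Finset.mem_map]; exact ⟨_, hS, rfl⟩)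
      have hA'conn : (G.induce ((A \ B : Finset V) : Set V)).Connected := by
        rw [Finset.coe_sdiff, ← hcompl]; exact conn_transfer hS2
      have hA'card : (A \ B).card = A.card - B.card := Finset.card_sdiff_of_subset hBA
      have hkA' : k ≤ (A \ B).card := by omega
      have hA'le : (A \ B).card ≤ N := by omega
      obtain ⟨P', hP'1, hP'2⟩ := IH (A \ B) hA'le hA'conn hkA'
      refine ⟨insert B P', ?_, ?_⟩
      · intro p hp
        rw [Finset.mem_insert] at hp
        rcases hp with rfl | hp
        · exact ⟨Finset.card_pos.mp (by omega), hBA, hBconn, by omega, by omega⟩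
        · obtain ⟨h1, h2, h3, h4, h5⟩ := hP'1 p hp
          exact ⟨h1, h2.trans (Finset.sdiff_subset), h3, h4, h5⟩
      · intro v hv
        by_cases hvB : v ∈ B
        · refine ⟨B, ⟨Finset.mem_insert_self _ _, hvB⟩, ?_⟩
          rintro q ⟨hq, hvq⟩
          rw [Finset.mem_insert] at hq
          rcases hq with rfl | hq
          · rfl
          · exact absurd ((hP'1 q hq).2.1 hvq) (by simp [hvB])
        · have hvA' : v ∈ A \ B := Finset.mem_sdiff.mpr ⟨hv, hvB⟩
          obtain ⟨p0, ⟨hp0P, hvp0⟩, hp0u⟩ := hP'2 v hvA'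
          refine ⟨p0, ⟨Finset.mem_insert_of_mem hp0P, hvp0⟩, ?_⟩
          rintro q ⟨hq, hvq⟩
          rw [Finset.mem_insert] at hq
          rcases hq with rfl | hq
          · exact absurd hvq hvB
          · exact hp0u q ⟨hq, hvq⟩


/-- Let `G` be a connected simple graph on `n` vertices in which every
vertex has degree at most `d` (`d ≥ 1`), and let `k` be an integer with `1 ≤ k ≤ n`.
Then the vertex set of `G` can be partitioned into nonempty parts such that each part
induces a connected subgraph of `G`, and each part has size at least `k` and at most
`(d+1)·k`.  In particular, the number of parts is at most `n / k`. -/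
theorem stmt_1 {V : Type*} [Fintype V] [DecidableEq V] (G : SimpleGraph V)
    [DecidableRel G.Adj] (hG : G.Connected) (n d k : ℕ) (hn : Fintype.card V = n)
    (hd : 1 ≤ d) (hdeg : ∀ v : V, G.degree v ≤ d) (hk1 : 1 ≤ k) (hkn : k ≤ n) :
    ∃ P : Finset (Finset V),
      (∀ p ∈ P, p.Nonempty) ∧
      (∀ v : V, ∃! p, p ∈ P ∧ v ∈ p) ∧
      (∀ p ∈ P, (G.induce (p : Set V)).Connected) ∧
      (∀ p ∈ P, k ≤ p.card ∧ p.card ≤ (d + 1) * k) ∧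
      (P.card : ℝ) ≤ (n : ℝ) / k := by
  classical
  have hdeg' : ∀ v : V, (G.neighborSet v).ncard ≤ d := by
    intro v
    have h : (G.neighborSet v).ncard = G.degree v := by
      show (G.neighborSet v).ncard = (G.neighborFinset v).card
      rw [← Set.ncard_coe_finset (G.neighborFinset v)]
      congr 1
      ext w
      simp
    rw [h]; exact hdeg v
  have hconnU : (G.induce ((Finset.univ : Finset V) : Set V)).Connected := by
    rw [Finset.coe_univ]
    exact ((induceUnivIso G).connected_iff).mpr hG
  have hcardU : (Finset.univ : Finset V).card = n := by rw [Finset.card_univ, hn]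
  obtain ⟨P, hP1, hP2⟩ := main_lemma G d k hd hk1 hdeg' (Finset.univ.card)
    Finset.univ le_rfl hconnU (by omega)
  refine ⟨P, fun p hp => (hP1 p hp).1, fun v => hP2 v (Finset.mem_univ v),
    fun p hp => (hP1 p hp).2.2.1, fun p hp => (hP1 p hp).2.2.2, ?_⟩
  -- counting
  have hdisj : ∀ p ∈ P, ∀ q ∈ P, p ≠ q → Disjoint p q := by
    intro p hp q hq hpq
    rw [Finset.disjoint_left]
    intro v hvp hvq
    obtain ⟨p0, _, hu⟩ := hP2 v (Finset.mem_univ v)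
    exact hpq ((hu p ⟨hp, hvp⟩).trans (hu q ⟨hq, hvq⟩).symm)
  have hbiU : P.biUnion (fun x => x) = Finset.univ := by
    ext v
    simp only [Finset.mem_biUnion, Finset.mem_univ, iff_true]
    obtain ⟨p0, ⟨hp0, hv0⟩, _⟩ := hP2 v (Finset.mem_univ v)
    exact ⟨p0, hp0, hv0⟩
  have hsum : ∑ p ∈ P, p.card = n := by
    rw [← Finset.card_biUnion hdisj, hbiU, hcardU]
  have hbound : P.card * k ≤ n := by
    calc P.card * k = ∑ _p ∈ P, k := by rw [Finset.sum_const, smul_eq_mul, mul_comm]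
      _ ≤ ∑ p ∈ P, p.card := Finset.sum_le_sum (fun p hp => (hP1 p hp).2.2.2.1)
      _ = n := hsum
  rw [le_div_iff₀ (by exact_mod_cast hk1 : (0 : ℝ) < (k : ℝ))]
  exact_mod_cast hbound
end

section
/- Let G be a connected simple graph, let T be a spanning tree of G rooted at a vertex r, and let e = {v, u} be an edge of T where u is a child of v (i.e., v lies on the unique T-path from u to r). Then e is a bridge of G if and only if every edge of G other than e that has an endpoint in the subtree of u has both of its endpoints in the subtree of u. -/
/-!
Deleting the tree edge `{v, u}` splits `T` into two components: the subtree of `u`, which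
reaches `u` along the initial segments of the paths to `r`, and its complement, which reaches
`v` (and `r`) along paths avoiding `u`. Since `T ≤ G`, an edge of `G` other than `{v, u}` leaving
the subtree would reconnect `v` and `u` in `G - {v, u}`; conversely a walk from `u` to `v` in
`G - {v, u}` must leave the subtree along such an edge.
-/

/-- The subtree of `u` in a tree `T` rooted at `r`: the set of vertices `x` such that
`u` lies on the (unique) path in `T` from `x` to `r`. -/
def subtreeOf {V : Type*} (T : SimpleGraph V) (r u : V) : Set V :=
  {x | ∀ p : T.Path x r, u ∈ p.val.support}

namespace SimpleGraph

variable {V : Type*}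

lemma Walk.IsPath.eq_of_mem_support_takeUntil_of_mem_support_dropUntil [DecidableEq V]
    {G : SimpleGraph V} {a b w x : V} {p : G.Walk a b} (hp : p.IsPath) (hw : w ∈ p.support)
    (hx₁ : x ∈ (p.takeUntil w hw).support) (hx₂ : x ∈ (p.dropUntil w hw).support) : x = w := by
  have hnodup := hp.support_nodup
  rw [← p.take_spec hw, Walk.support_append, List.nodup_append] at hnodup
  rw [← Walk.cons_tail_support, List.mem_cons] at hx₂
  exact hx₂.resolve_right fun hx => hnodup.2.2 x hx₁ x hx rfl

section Bridge

variable {G : SimpleGraph V} {S : Set V} {u v : V}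

lemma isBridge_of_forall_adj_mem (hu : u ∈ S) (hv : v ∉ S)
    (hS : ∀ a b : V, G.Adj a b → s(a, b) ≠ s(v, u) → a ∈ S → b ∈ S) : G.IsBridge s(v, u) := by
  rw [isBridge_iff]
  rintro ⟨w⟩
  obtain ⟨d, -, hd₁, hd₂⟩ := w.reverse.exists_boundary_dart S hu hv
  obtain ⟨hadj, hne⟩ := (deleteEdges_adj ..).mp d.adj
  exact hd₂ (hS _ _ hadj hne hd₁)

lemma IsBridge.forall_adj_mem (hb : G.IsBridge s(v, u))
    (hin : ∀ x ∈ S, (G.deleteEdges {s(v, u)}).Reachable x u)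
    (hout : ∀ x ∉ S, (G.deleteEdges {s(v, u)}).Reachable x v) :
    ∀ a b : V, G.Adj a b → s(a, b) ≠ s(v, u) → a ∈ S → b ∈ S := by
  intro a b hab hne ha
  by_contra hb'
  have hba : (G.deleteEdges {s(v, u)}).Adj b a :=
    (deleteEdges_adj ..).mpr ⟨hab.symm, by rwa [Set.mem_singleton_iff, Sym2.eq_swap]⟩
  exact isBridge_iff.mp hb ((hout b hb').symm.trans (hba.reachable.trans (hin a ha)))

end Bridge

section Subtree

variable {T : SimpleGraph V} {r u v x : V}

lemma mem_subtreeOf_self : u ∈ subtreeOf T r u := fun p => p.val.start_mem_support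

lemma reachable_deleteEdges_of_notMem_subtreeOf (hx : x ∉ subtreeOf T r u) (w : V) :
    (T.deleteEdges {s(w, u)}).Reachable x r := by
  obtain ⟨p, hp⟩ := not_forall.mp hx
  exact reachable_deleteEdges_iff_exists_walk.mpr
    ⟨p.val, fun h => hp (p.val.snd_mem_support_of_mem_edges h)⟩

lemma reachable_deleteEdges_of_mem_subtreeOf (hT : T.Connected) (hvu : v ≠ u)
    (hchild : ∀ p : T.Path u r, v ∈ p.val.support) (hx : x ∈ subtreeOf T r u) :
    (T.deleteEdges {s(v, u)}).Reachable x u := by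
  classical
  obtain ⟨p, hp⟩ := hT.preconnected.exists_isPath x r
  have hu := hx ⟨p, hp⟩
  have hv_drop := hchild ⟨_, hp.dropUntil hu⟩
  refine reachable_deleteEdges_iff_exists_walk.mpr ⟨p.takeUntil u hu, fun he => hvu ?_⟩
  exact hp.eq_of_mem_support_takeUntil_of_mem_support_dropUntil hu
    ((p.takeUntil u hu).fst_mem_support_of_mem_edges he) hv_drop

lemma notMem_subtreeOf_of_forall_mem_support (hT : T.Connected) (hvu : v ≠ u)
    (hchild : ∀ p : T.Path u r, v ∈ p.val.support) : v ∉ subtreeOf T r u := by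
  classical
  obtain ⟨p, hp⟩ := hT.preconnected.exists_isPath u r
  have hv := hchild ⟨p, hp⟩
  intro hsub
  exact hvu.symm (hp.eq_of_mem_support_takeUntil_of_mem_support_dropUntil hv
    (p.takeUntil v hv).start_mem_support (hsub ⟨_, hp.dropUntil hv⟩))

end Subtree

end SimpleGraph

open SimpleGraph

theorem stmt_3_general {V : Type*} (G T : SimpleGraph V) (hT : T.IsTree)
    (hTG : T ≤ G) (r v u : V) (hvu : T.Adj v u)
    (hchild : ∀ p : T.Path u r, v ∈ p.val.support) :
    G.IsBridge s(v, u) ↔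
      ∀ a b : V, G.Adj a b → s(a, b) ≠ s(v, u) →
        a ∈ subtreeOf T r u → b ∈ subtreeOf T r u := by
  have hv := notMem_subtreeOf_of_forall_mem_support hT.connected hvu.ne hchild
  have hmono := deleteEdges_mono (s := {s(v, u)}) hTG
  refine ⟨fun hb => hb.forall_adj_mem (fun x hx => ?_) (fun x hx => ?_),
    isBridge_of_forall_adj_mem mem_subtreeOf_self hv⟩
  · exact (reachable_deleteEdges_of_mem_subtreeOf hT.connected hvu.ne hchild hx).mono hmono
  · exact ((reachable_deleteEdges_of_notMem_subtreeOf hx v).trans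
      (reachable_deleteEdges_of_notMem_subtreeOf hv v).symm).mono hmono

/-- Let `G` be a connected simple graph, `T` a spanning tree of `G`
rooted at a vertex `r`, and `e = {v, u}` an edge of `T` where `u` is a child of `v`
(i.e. `v` lies on the unique `T`-path from `u` to `r`).  Then `e` is a bridge of `G`
if and only if every edge of `G` other than `e` that has an endpoint in the subtree
of `u` has both of its endpoints in the subtree of `u`. -/
theorem stmt_3 {V : Type*} (G T : SimpleGraph V) (hG : G.Connected) (hT : T.IsTree)
    (hTG : T ≤ G) (r v u : V) (hvu : T.Adj v u)
    (hchild : ∀ p : T.Path u r, v ∈ p.val.support) :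
    G.IsBridge s(v, u) ↔
      ∀ a b : V, G.Adj a b → s(a, b) ≠ s(v, u) →
        a ∈ subtreeOf T r u → b ∈ subtreeOf T r u :=
  stmt_3_general G T hT hTG r v u hvu hchild
end

section
/- Let G be a connected simple graph, let T be a spanning tree of G rooted at a vertex r, and let v be a vertex with v ≠ r. If v is an articulation point of G (i.e., deleting v disconnects G), then there exists a child u of v in T such that every edge of G with an endpoint in the subtree of u has its other endpoint in the subtree of v. -/
/-- `v` is an articulation point (cut vertex) of `G`: the induced subgraph of `G` on the
complement of `{v}` is disconnected. -/
def IsArticulationPoint {V : Type*} (G : SimpleGraph V) (v : V) : Prop :=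
  ¬ (G.induce ({v}ᶜ : Set V)).Connected

/-- Transfer a walk whose support lies in `s` to the induced subgraph on `s`. -/
lemma reachable_induce_of_walk {V : Type*} {G : SimpleGraph V} {s : Set V} :
    ∀ {a b : V} (w : G.Walk a b) (hw : ∀ x ∈ w.support, x ∈ s),
      (G.induce s).Reachable ⟨a, hw a w.start_mem_support⟩ ⟨b, hw b w.end_mem_support⟩ := by
  intro a b w
  induction w with
  | nil => intro hw; rfl
  | cons h p ih =>
    intro hw
    have hw' : ∀ x ∈ p.support, x ∈ s := fun x hx => hw x (by simp [hx])
    have h1 : (G.induce s).Adj ⟨_, hw _ (SimpleGraph.Walk.start_mem_support _)⟩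
        ⟨_, hw' _ p.start_mem_support⟩ := h
    exact h1.reachable.trans (ih hw')

theorem mem_support_mapLe {V : Type*} {G G' : SimpleGraph V} (h : G ≤ G') {a b x : V}
    (p : G.Walk a b) : x ∈ (p.mapLe h).support ↔ x ∈ p.support := by
  simp [SimpleGraph.Walk.support_map]

/-- Let `G` be a connected simple graph, `T` a spanning tree of `G`
rooted at a vertex `r`, and `v ≠ r` a vertex.  If `v` is an articulation point of `G`,
then there exists a child `u` of `v` in `T` such that every edge of `G` with an endpoint
in the subtree of `u` has its other endpoint in the subtree of `v`. -/
theorem stmt_4 {V : Type*} (G T : SimpleGraph V) (hG : G.Connected) (hT : T.IsTree)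
    (hTG : T ≤ G) (r v : V) (hvr : v ≠ r) (hart : IsArticulationPoint G v) :
    ∃ u : V, T.Adj v u ∧ (∀ p : T.Path u r, v ∈ p.val.support) ∧
      ∀ a b : V, G.Adj a b → a ∈ subtreeOf T r u → b ∈ subtreeOf T r v := by
  classical
  -- `conn a` : there's a walk from `a` to `r` in `G` avoiding `v`.
  set conn : V → Prop := fun a => ∃ w : G.Walk a r, v ∉ w.support with hconn
  -- Step A: there is a vertex `x ≠ v` with `¬ conn x`.
  have hrv : r ∈ ({v}ᶜ : Set V) := by simp [Ne.symm hvr]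
  have stepA : ∃ x, x ≠ v ∧ ¬ conn x := by
    by_contra hA
    push_neg at hA
    apply hart
    have : Nonempty ({v}ᶜ : Set V) := ⟨⟨r, hrv⟩⟩
    refine SimpleGraph.Connected.mk ?_
    intro a b
    have key : ∀ c : ({v}ᶜ : Set V), (G.induce ({v}ᶜ : Set V)).Reachable c ⟨r, hrv⟩ := by
      rintro ⟨c, hc⟩
      have hcv : c ≠ v := hc
      obtain ⟨w, hw⟩ := hA c hcv
      have hsub : ∀ x ∈ w.support, x ∈ ({v}ᶜ : Set V) := by
        intro x hx
        simp only [Set.mem_compl_iff, Set.mem_singleton_iff]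
        rintro rfl; exact hw hx
      exact reachable_induce_of_walk w hsub
    exact (key a).trans (key b).symm
  obtain ⟨x, hxv, hx⟩ := stepA
  -- Step E (general): if `¬ conn a` then every `T`-path from `a` to `r` contains `v`.
  have keyE : ∀ a, ¬ conn a → ∀ p : T.Path a r, v ∈ p.val.support := by
    intro a ha p
    by_contra hv
    exact ha ⟨p.val.mapLe hTG, fun h => hv ((mem_support_mapLe hTG p.val).mp h)⟩
  -- lemma: ¬conn transfers along T-walks avoiding v
  have transfer : ∀ {a b : V} (w : T.Walk a b), v ∉ w.support → ¬ conn b → ¬ conn a := by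
    intro a b w hvw hb ⟨wa, hwa⟩
    refine hb ⟨(w.reverse.mapLe hTG).append wa, ?_⟩
    rw [SimpleGraph.Walk.mem_support_append_iff]
    rintro (h | h)
    · exact hvw (by simpa using (mem_support_mapLe hTG w.reverse).mp h)
    · exact hwa h
  -- Step B: T-path from x to r.
  obtain ⟨w0⟩ := hT.isConnected x r
  let pp : T.Path x r := w0.toPath
  have hvp : v ∈ pp.val.support := keyE x hx pp
  -- Step D: extract the child u.
  have hq : (pp.val.takeUntil v hvp).IsPath := pp.2.takeUntil hvp
  have hqr : (pp.val.takeUntil v hvp).reverse.IsPath := hq.reverse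
  obtain ⟨u, hadj, w', hw'eq⟩ :=
    SimpleGraph.Walk.exists_eq_cons_of_ne (Ne.symm hxv) (pp.val.takeUntil v hvp).reverse
  have hcons : ((SimpleGraph.Walk.cons hadj w')).IsPath := hw'eq ▸ hqr
  rw [SimpleGraph.Walk.cons_isPath_iff] at hcons
  have hvw' : v ∉ w'.support := hcons.2
  -- ¬ conn u
  have hu : ¬ conn u := transfer w' hvw' hx
  -- v ∉ subtree u (needed to show a ≠ v later):
  have hpvr : (pp.val.dropUntil v hvp).IsPath := pp.2.dropUntil hvp
  have huq : u ∈ (pp.val.takeUntil v hvp).support := by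
    have : u ∈ (pp.val.takeUntil v hvp).reverse.support := by
      rw [hw'eq]; simp
    simpa using this
  have hupvr : u ∉ (pp.val.dropUntil v hvp).support := by
    intro hmem
    have hnd := pp.2.support_nodup
    rw [← SimpleGraph.Walk.take_spec pp.val hvp, SimpleGraph.Walk.support_append] at hnd
    have := List.disjoint_of_nodup_append hnd
    refine this huq ?_
    have := (pp.val.dropUntil v hvp).support_eq_cons
    rw [this, List.mem_cons] at hmem
    rcases hmem with h | h
    · exact absurd h.symm hadj.ne
    · exact h
  have hvnots : v ∉ subtreeOf T r u := by
    intro hmem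
    exact hupvr (hmem ⟨pp.val.dropUntil v hvp, hpvr⟩)
  -- Step F: a ∈ subtree u → ¬ conn a
  have stepF : ∀ a ∈ subtreeOf T r u, ¬ conn a := by
    intro a hmem
    obtain ⟨wa0⟩ := hT.isConnected a r
    let pa : T.Path a r := wa0.toPath
    have hua : u ∈ pa.val.support := hmem pa
    have hq2 : (pa.val.dropUntil u hua).IsPath := pa.2.dropUntil hua
    have hvq2 : v ∈ (pa.val.dropUntil u hua).support :=
      keyE u hu ⟨pa.val.dropUntil u hua, hq2⟩
    have hvq1 : v ∉ (pa.val.takeUntil u hua).support := by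
      intro hc
      have hnd := pa.2.support_nodup
      rw [← SimpleGraph.Walk.take_spec pa.val hua, SimpleGraph.Walk.support_append] at hnd
      have := List.disjoint_of_nodup_append hnd
      refine this hc ?_
      rw [(pa.val.dropUntil u hua).support_eq_cons, List.mem_cons] at hvq2
      rcases hvq2 with h | h
      · exact absurd h hadj.ne
      · exact h
    exact transfer (pa.val.takeUntil u hua) hvq1 hu
  refine ⟨u, hadj, keyE u hu, ?_⟩
  intro a b hab hmema
  have hanv : a ≠ v := fun h => hvnots (h ▸ hmema)
  have ha : ¬ conn a := stepF a hmema
  have hb : ¬ conn b := by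
    rintro ⟨wb, hwb⟩
    exact ha ⟨SimpleGraph.Walk.cons hab wb, by
      rw [SimpleGraph.Walk.support_cons, List.mem_cons]
      rintro (h | h)
      · exact hanv h.symm
      · exact hwb h⟩
  exact keyE b hb
end

section
/- Let G be a simple graph and let u, v be a biconnected pair of vertices of G, i.e., u ≠ v, u and v are connected in G, and for every vertex w ∉ {u, v} the vertices u and v are connected in the induced subgraph of G on the complement of {w}. Then for every simple path p in G from u to v and every vertex x of p with x ∉ {u, v}, the vertices u and x also form a biconnected pair. -/
/-!
Split `p` at `x` into `q : u ⟶ x` and `r : x ⟶ v`. A vertex `w ∉ {u, x}` missed by `q` is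
avoided by `q` itself. If `w` lies on `q`, then it does not lie on `r` because `p` is a path; in
particular `w ≠ v`, so `u` reaches `v` avoiding `w`, and `v` reaches `x` along `r` reversed.
-/

/-- `u` and `v` form a biconnected pair in `G`: they are distinct, connected in `G`,
and for every vertex `w ∉ {u, v}` they remain connected in the induced subgraph of `G`
on the complement of `{w}`. -/
def BiconnectedPair {V : Type*} (G : SimpleGraph V) (u v : V) : Prop :=
  u ≠ v ∧ G.Reachable u v ∧
    ∀ (w : V) (hwu : w ≠ u) (hwv : w ≠ v),
      (G.induce ({w}ᶜ : Set V)).Reachable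
        ⟨u, by simpa using fun h => hwu h.symm⟩
        ⟨v, by simpa using fun h => hwv h.symm⟩

lemma SimpleGraph.Walk.reachable_induce_compl_singleton {V : Type*} {G : SimpleGraph V}
    {a b w : V} (p : G.Walk a b) (hw : w ∉ p.support) :
    (G.induce ({w}ᶜ : Set V)).Reachable
      ⟨a, Set.mem_compl_singleton_iff.mpr (ne_of_mem_of_not_mem p.start_mem_support hw)⟩
      ⟨b, Set.mem_compl_singleton_iff.mpr (ne_of_mem_of_not_mem p.end_mem_support hw)⟩ :=
  (p.induce _ fun _ hy => Set.mem_compl_singleton_iff.mpr (ne_of_mem_of_not_mem hy hw)).reachable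

theorem stmt_5_general {V : Type*} (G : SimpleGraph V) (u v : V)
    (hbc : BiconnectedPair G u v) (p : G.Walk u v) (hp : p.IsPath)
    (x : V) (hx : x ∈ p.support) (hxu : x ≠ u) :
    BiconnectedPair G u x := by
  obtain ⟨-, -, hbc⟩ := hbc
  obtain ⟨q, r, -, -, rfl⟩ := hp.mem_support_iff_exists_append.mp hx
  refine ⟨hxu.symm, q.reachable, fun w hwu hwx => ?_⟩
  by_cases hwq : w ∈ q.support
  · have hwr : w ∉ r.support := fun hwr => hp.ne_of_mem_support_of_append hwx hwq hwr rfl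
    have hwv : w ≠ v := fun h => hwr (h ▸ r.end_mem_support)
    exact (hbc w hwu hwv).trans (r.reachable_induce_compl_singleton hwr).symm
  · exact q.reachable_induce_compl_singleton hwq

/-- Let `u, v` be a biconnected pair of vertices of a simple graph `G`.
Then for every simple path `p` in `G` from `u` to `v` and every vertex `x` of `p` with
`x ∉ {u, v}`, the vertices `u` and `x` also form a biconnected pair. -/
theorem stmt_5 {V : Type*} (G : SimpleGraph V) (u v : V)
    (hbc : BiconnectedPair G u v) (p : G.Walk u v) (hp : p.IsPath)
    (x : V) (hx : x ∈ p.support) (hxu : x ≠ u) (hxv : x ≠ v) :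
    BiconnectedPair G u x :=
  stmt_5_general G u v hbc p hp x hx hxu
end

section
/- Let G be a simple graph on vertex set V, let W ⊆ V be a nonempty set of vertices inducing a connected subgraph of G, and let e = {a, b} be an edge of G with a ∉ W and b ∉ W. Let G/W be the contraction of W: the simple graph on (V \ W) ∪ {⋆} in which two vertices of V \ W are adjacent iff they are adjacent in G, and a vertex x ∈ V \ W is adjacent to ⋆ iff x is adjacent in G to some vertex of W. Then e is a bridge of G if and only if e (viewed as an edge of G/W) is a bridge of G/W. -/
/-!
Deleting an edge with both ends outside `W` commutes with contracting `W`, so it suffices that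
contracting a set `W` inducing a connected subgraph preserves reachability between vertices
outside `W`. A walk in `G` projects to a walk in `G/W` by sending `W` to `⋆`; conversely each
edge of `G/W` lifts to a walk in `G`, since any two vertices of `W` are joined inside `W`.
-/

/-- The contraction `G/W` of a set `W` of vertices of `G`: the simple graph on
`(V \ W) ∪ {⋆}` (encoded as `Option ↥(Wᶜ)`, with `none` playing the role of `⋆`) in
which two vertices of `V \ W` are adjacent iff they are adjacent in `G`, and a vertex
`x ∈ V \ W` is adjacent to `⋆` iff `x` is adjacent in `G` to some vertex of `W`. -/
def contractSet {V : Type*} (G : SimpleGraph V) (W : Set V) :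
    SimpleGraph (Option ↥(Wᶜ : Set V)) where
  Adj x y :=
    match x, y with
    | some a, some b => G.Adj a b
    | some a, none => ∃ w ∈ W, G.Adj (a : V) w
    | none, some b => ∃ w ∈ W, G.Adj (b : V) w
    | none, none => False
  symm := by
    constructor
    rintro (_ | a) (_ | b) h
    · exact h.elim
    · exact h
    · exact h
    · exact h.symm
  loopless := by
    constructor
    rintro (_ | a) h
    · exact h.elim
    · exact G.irrefl h

namespace SimpleGraph

theorem Reachable.lift {V V' : Type*} {G : SimpleGraph V} {G' : SimpleGraph V'} (f : V → V')
    (hf : ∀ x y, G.Adj x y → G'.Reachable (f x) (f y)) {u v : V} (h : G.Reachable u v) :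
    G'.Reachable (f u) (f v) := by
  obtain ⟨p⟩ := h
  induction p with
  | nil => rfl
  | cons hxy _ ih => exact (hf _ _ hxy).trans ih

variable {V : Type*} (G : SimpleGraph V) {W : Set V}

theorem reachable_of_induce_connected {u v : V} (hW : (G.induce W).Connected) (hu : u ∈ W)
    (hv : v ∈ W) : G.Reachable u v :=
  (hW ⟨u, hu⟩ ⟨v, hv⟩).map (Embedding.induce W).toHom

theorem contractSet_reachable_some_iff (hW : (G.induce W).Connected) {u v : ↥(Wᶜ : Set V)} :
    (contractSet G W).Reachable (some u) (some v) ↔ G.Reachable u v := by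
  classical
  constructor
  · obtain ⟨w₀⟩ := hW.nonempty
    refine fun h => h.lift (fun x : Option ↥(Wᶜ : Set V) => x.elim (w₀ : V) Subtype.val) ?_
    rintro (_ | x) (_ | y) hxy
    · exact hxy.elim
    · obtain ⟨w, hw, hyw⟩ := hxy
      exact (reachable_of_induce_connected G hW w₀.2 hw).trans hyw.symm.reachable
    · obtain ⟨w, hw, hxw⟩ := hxy
      exact hxw.reachable.trans (reachable_of_induce_connected G hW hw w₀.2)
    · exact Adj.reachable hxy
  · intro h
    have key := h.lift (G' := contractSet G W)
      (fun x => if hx : x ∈ W then none else some ⟨x, hx⟩) ?_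
    · rwa [dif_neg u.2, dif_neg v.2] at key
    intro x y hxy
    by_cases hx : x ∈ W <;> by_cases hy : y ∈ W
    · rw [dif_pos hx, dif_pos hy]
    · rw [dif_pos hx, dif_neg hy]
      exact Adj.reachable ⟨x, hx, hxy.symm⟩
    · rw [dif_neg hx, dif_pos hy]
      exact Adj.reachable ⟨y, hy, hxy⟩
    · rw [dif_neg hx, dif_neg hy]
      exact Adj.reachable hxy

theorem contractSet_deleteEdges_singleton (a b : ↥(Wᶜ : Set V)) :
    (contractSet G W).deleteEdges {s(some a, some b)} =
      contractSet (G.deleteEdges {s((a : V), b)}) W := by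
  have hW (x : V) {w : V} (hw : w ∈ W) : s(x, w) ∉ ({s((a : V), b)} : Set (Sym2 V)) := by
    intro h
    rcases Sym2.mem_iff.1 (Set.mem_singleton_iff.1 h ▸ Sym2.mem_mk_right x w) with rfl | rfl
    exacts [a.2 hw, b.2 hw]
  ext (_ | u) (_ | v)
  · simp [contractSet]
  · simp only [contractSet, deleteEdges_adj]
    exact (and_iff_left (by simp)).trans
      (exists_congr fun _ => and_congr_right fun hw => (and_iff_left (hW v hw)).symm)
  · simp only [contractSet, deleteEdges_adj]
    exact (and_iff_left (by simp)).trans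
      (exists_congr fun _ => and_congr_right fun hw => (and_iff_left (hW u hw)).symm)
  · simp [contractSet, Subtype.ext_iff]

theorem induce_deleteEdges_singleton_of_notMem {a : V} (b : V) (ha : a ∉ W) :
    (G.deleteEdges {s(a, b)}).induce W = G.induce W := by
  ext u v
  simp only [comap_adj, Function.Embedding.coe_subtype, deleteEdges_adj, Set.mem_singleton_iff,
    Sym2.eq_iff, and_iff_left_iff_imp]
  rintro - (⟨rfl, -⟩ | ⟨-, rfl⟩)
  exacts [ha u.2, ha v.2]

end SimpleGraph

theorem stmt_6_general {V : Type*} (G : SimpleGraph V) (W : Set V)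
    (hWconn : (G.induce W).Connected) (a b : V)
    (ha : a ∉ W) (hb : b ∉ W) :
    G.IsBridge s(a, b) ↔
      (contractSet G W).IsBridge
        s(some ⟨a, ha⟩, some ⟨b, hb⟩) := by
  have hWconn' : ((G.deleteEdges {s(a, b)}).induce W).Connected := by
    rwa [SimpleGraph.induce_deleteEdges_singleton_of_notMem G b ha]
  rw [SimpleGraph.isBridge_iff, SimpleGraph.isBridge_iff,
    SimpleGraph.contractSet_deleteEdges_singleton,
    SimpleGraph.contractSet_reachable_some_iff _ hWconn']

/-- Let `G` be a simple graph, `W` a nonempty set of vertices inducing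
a connected subgraph of `G`, and `e = {a, b}` an edge of `G` with `a ∉ W` and `b ∉ W`.
Then `e` is a bridge of `G` if and only if `e`, viewed as an edge of the contraction
`G/W`, is a bridge of `G/W`. -/
theorem stmt_6 {V : Type*} (G : SimpleGraph V) (W : Set V) (hWne : W.Nonempty)
    (hWconn : (G.induce W).Connected) (a b : V) (hab : G.Adj a b)
    (ha : a ∉ W) (hb : b ∉ W) :
    G.IsBridge s(a, b) ↔
      (contractSet G W).IsBridge
        s(some ⟨a, ha⟩, some ⟨b, hb⟩) :=
  stmt_6_general G W hWconn a b ha hb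
end

section
/- Let G be a connected simple graph, let T be a spanning tree of G, and let u, v be distinct vertices of G. Then there exists a vertex w ∉ {u, v} such that u and v lie in different connected components of the induced subgraph of G on the complement of {w} if and only if there exists such a vertex w among the internal vertices of the unique path in T from u to v. -/
lemma walk_avoid_reachable {V : Type*} (G : SimpleGraph V) (w : V) :
    ∀ {u v : V} (p : G.Walk u v), w ∉ p.support →
      ∀ (hu : u ∈ ({w}ᶜ : Set V)) (hv : v ∈ ({w}ᶜ : Set V)),
      (G.induce ({w}ᶜ : Set V)).Reachable ⟨u, hu⟩ ⟨v, hv⟩ := by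
  intro u v p
  induction p with
  | nil => intro _ hu hv; exact SimpleGraph.Reachable.refl _
  | @cons a b c h q ih =>
    intro hw hu hv
    rw [SimpleGraph.Walk.support_cons] at hw
    simp only [List.mem_cons, not_or] at hw
    have hb : b ∈ ({w}ᶜ : Set V) := by
      intro hmem
      simp only [Set.mem_singleton_iff] at hmem; subst hmem; exact hw.2 q.start_mem_support
    exact (SimpleGraph.Adj.reachable (show (G.induce ({w}ᶜ : Set V)).Adj ⟨a, hu⟩ ⟨b, hb⟩ from h)).trans (ih hw.2 hb hv)

theorem stmt_9 {V : Type*} (G T : SimpleGraph V) (hG : G.Connected) (hT : T.IsTree)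
    (hTG : T ≤ G) (u v : V) (huv : u ≠ v) :
    (∃ (w : V) (hwu : w ≠ u) (hwv : w ≠ v),
      ¬ (G.induce ({w}ᶜ : Set V)).Reachable
          ⟨u, by simpa using fun h => hwu h.symm⟩
          ⟨v, by simpa using fun h => hwv h.symm⟩) ↔
    (∃ (w : V) (hwu : w ≠ u) (hwv : w ≠ v),
      (∀ p : T.Path u v, w ∈ p.val.support) ∧
      ¬ (G.induce ({w}ᶜ : Set V)).Reachable
          ⟨u, by simpa using fun h => hwu h.symm⟩
          ⟨v, by simpa using fun h => hwv h.symm⟩) := by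
  constructor
  · rintro ⟨w, hwu, hwv, hnr⟩
    refine ⟨w, hwu, hwv, ?_, hnr⟩
    intro p
    by_contra hws
    apply hnr
    have hws' : w ∉ (p.val.mapLe hTG).support := by
      simpa [SimpleGraph.Walk.mapLe, SimpleGraph.Walk.support_map] using hws
    exact walk_avoid_reachable G w (p.val.mapLe hTG) hws' _ _
  · rintro ⟨w, hwu, hwv, _, hnr⟩
    exact ⟨w, hwu, hwv, hnr⟩
end

section
/- Let G be a connected simple graph, let T be a spanning tree of G, and let u, v be distinct vertices of G. Then there exists an edge e of G such that u and v lie in different connected components of the graph obtained from G by deleting e if and only if some edge of the unique path in T from u to v is a bridge of G. -/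
/-!
If deleting `e` separates `u` from `v`, every walk from `u` to `v`, in particular the tree path,
uses `e`; and `e` is a bridge, since deleting a non-bridge edge keeps `G` connected.
Conversely, the tree path is a trail from `u` to `v` in `G`. If it contains a bridge `s(x, y)`
and `u, v` were still joined after deleting it, then the parts of the trail before and after the
bridge would join both `x` and `y` to `u`, hence to each other.
-/

namespace SimpleGraph

variable {V : Type*} {G : SimpleGraph V} {u v x y : V}

lemma Connected.isBridge_of_not_reachable_deleteEdges (hG : G.Connected) {e : Sym2 V}
    (huv : ¬ (G.deleteEdges {e}).Reachable u v) : G.IsBridge e := by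
  induction e with
  | h x y =>
    by_contra hb
    exact huv ((hG.connected_delete_edge_of_not_isBridge hb).preconnected u v)

namespace Walk.IsTrail

variable {w : G.Walk u v}

lemma reachable_deleteEdges_of_mem_edges (hw : w.IsTrail) (hxy : s(x, y) ∈ w.edges)
    (huv : (G.deleteEdges {s(x, y)}).Reachable u v) :
    (G.deleteEdges {s(x, y)}).Reachable u y := by
  by_contra huy
  exact hw.not_mem_edges_of_not_reachable huy (fun hvy ↦ huy (huv.trans hvy)) hxy

lemma not_reachable_deleteEdges_of_isBridge (hw : w.IsTrail) (hxy : s(x, y) ∈ w.edges)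
    (hb : G.IsBridge s(x, y)) : ¬ (G.deleteEdges {s(x, y)}).Reachable u v := by
  intro huv
  have hux := hw.reachable_deleteEdges_of_mem_edges (Sym2.eq_swap ▸ hxy) (Sym2.eq_swap ▸ huv)
  rw [Sym2.eq_swap] at hux
  exact hb (hux.symm.trans (hw.reachable_deleteEdges_of_mem_edges hxy huv))

end Walk.IsTrail

end SimpleGraph

open SimpleGraph

theorem stmt_10_general {V : Type*} (G T : SimpleGraph V) (hG : G.Connected) (hT : T.IsTree)
    (hTG : T ≤ G) (u v : V) :
    (∃ e ∈ G.edgeSet, ¬ (G.deleteEdges {e}).Reachable u v) ↔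
    (∃ e : Sym2 V, (∀ p : T.Path u v, e ∈ p.val.edges) ∧ G.IsBridge e) := by
  constructor
  · rintro ⟨e, -, huv⟩
    refine ⟨e, fun p ↦ ?_, hG.isBridge_of_not_reachable_deleteEdges huv⟩
    rw [← Walk.edges_mapLe_eq_edges hTG]
    exact (p.val.mapLe hTG).mem_edges_of_not_reachable_deleteEdges huv
  · rintro ⟨e, he, hb⟩
    obtain ⟨w, hw⟩ := (hT.connected u v).exists_isPath
    have hew : e ∈ (w.mapLe hTG).edges := by
      rw [Walk.edges_mapLe_eq_edges]
      exact he ⟨w, hw⟩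
    induction e with
    | h x y =>
      exact ⟨s(x, y), Walk.edges_subset_edgeSet _ hew,
        ((Walk.isTrail_mapLe hTG).mpr hw.isTrail).not_reachable_deleteEdges_of_isBridge hew hb⟩

/-- Let `G` be a connected simple graph, `T` a spanning tree of `G`,
and `u, v` distinct vertices of `G`.  Then there exists an edge `e` of `G` such that
`u` and `v` lie in different connected components of the graph obtained from `G` by
deleting `e` if and only if some edge of the unique path in `T` from `u` to `v` is a
bridge of `G`. -/
theorem stmt_10 {V : Type*} (G T : SimpleGraph V) (hG : G.Connected) (hT : T.IsTree)
    (hTG : T ≤ G) (u v : V) (huv : u ≠ v) :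
    (∃ e ∈ G.edgeSet, ¬ (G.deleteEdges {e}).Reachable u v) ↔
    (∃ e : Sym2 V, (∀ p : T.Path u v, e ∈ p.val.edges) ∧ G.IsBridge e) :=
  stmt_10_general G T hG hT hTG u v
end

section
/- Let G be a simple graph and let e, f, g be edges of G. If some cycle of G contains both e and f, and some cycle of G contains both f and g, then some cycle of G contains both e and g. -/
/-!
Suppose `e` does not already lie on the cycle `C₂` through `f` and `g`. Deleting `e` from the
cycle `C₁` leaves a path through `f`, hence one that meets `C₂`. Following `C₁` from the two ends
of `e` until `C₂` is first reached gives an ear of `C₂`: a path through `e` joining two distinct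
vertices `x`, `y` of `C₂` and sharing no other vertex and no edge with `C₂`. The ear, closed up by
whichever of the two `x`–`y` arcs of `C₂` carries `g`, is a cycle through `e` and `g`.
-/

namespace SimpleGraph.Walk

variable {V : Type*} {G : SimpleGraph V}

lemma IsPath.start_notMem_support_tail {u v : V} {p : G.Walk u v} (hp : p.IsPath) :
    u ∉ p.support.tail := by
  have h := hp.support_nodup
  rw [← cons_tail_support] at h
  exact (List.nodup_cons.mp h).1

lemma isPath_append_iff {u v w : V} {p : G.Walk u v} {q : G.Walk v w} :
    (p.append q).IsPath ↔
      p.IsPath ∧ q.IsPath ∧ ∀ z ∈ p.support, z ∈ q.support → z = v := by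
  refine ⟨fun h => ⟨h.of_append_left, h.of_append_right, fun z hzp hzq => ?_⟩,
    fun ⟨hp, hq, h⟩ => ?_⟩
  · rw [isPath_def, support_append, List.nodup_append'] at h
    rw [← cons_tail_support, List.mem_cons] at hzq
    exact hzq.resolve_right (h.2.2 hzp)
  · rw [isPath_def, support_append, List.nodup_append']
    refine ⟨hp.support_nodup, hq.support_nodup.sublist (List.tail_sublist _),
      fun z hzp hzq => ?_⟩
    obtain rfl := h z hzp (List.mem_of_mem_tail hzq)
    exact hq.start_notMem_support_tail hzq

lemma IsPath.isCycle_append_of_disjoint {u v : V} {p : G.Walk u v} {q : G.Walk v u}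
    (hp : p.IsPath) (hq : q.IsPath) (huv : u ≠ v)
    (hs : ∀ z ∈ p.support, z ∈ q.support → z = u ∨ z = v)
    (he : p.edges.Disjoint q.edges) :
    (p.append q).IsCycle := by
  rw [isCycle_def, isTrail_append]
  refine ⟨⟨hp.isTrail, hq.isTrail, he⟩, ?_, ?_⟩
  · intro hnil
    have hlen := congrArg length hnil
    rw [length_append, length_nil] at hlen
    exact huv (eq_of_length_eq_zero (p := p) (by omega))
  · rw [tail_support_append, List.nodup_append']
    refine ⟨hp.support_nodup.sublist (List.tail_sublist _),
      hq.support_nodup.sublist (List.tail_sublist _), fun z hzp hzq => ?_⟩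
    rcases hs z (List.mem_of_mem_tail hzp) (List.mem_of_mem_tail hzq) with rfl | rfl
    · exact hp.start_notMem_support_tail hzp
    · exact hq.start_notMem_support_tail hzq

lemma disjoint_edges_of_forall_mem_support_eq {u v w w' t : V} {p : G.Walk u v}
    {c : G.Walk w w'} (h : ∀ z ∈ p.support, z ∈ c.support → z = t) :
    p.edges.Disjoint c.edges := by
  intro e hp hc
  induction e using Sym2.ind with
  | _ x y =>
    have hx := h x (p.fst_mem_support_of_mem_edges hp) (c.fst_mem_support_of_mem_edges hc)
    have hy := h y (p.snd_mem_support_of_mem_edges hp) (c.snd_mem_support_of_mem_edges hc)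
    exact (p.adj_of_mem_edges hp).ne (hx.trans hy.symm)

lemma exists_split_at_first_mem_support [DecidableEq V] {u v w w' : V} {p : G.Walk u v}
    {c : G.Walk w w'} {f : Sym2 V} (hfp : f ∈ p.edges) (hfc : f ∈ c.edges) :
    ∃ x ∈ c.support, ∃ hx : x ∈ p.support,
      (∀ z ∈ (p.takeUntil x hx).support, z ∈ c.support → z = x) ∧
        f ∈ (p.dropUntil x hx).edges := by
  have hmeet : {z ∈ c.support.toFinset | z ∈ p.support}.Nonempty := by
    induction f using Sym2.ind with
    | _ z _ =>
      exact ⟨z, Finset.mem_filter.mpr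
        ⟨List.mem_toFinset.mpr (c.fst_mem_support_of_mem_edges hfc),
          p.fst_mem_support_of_mem_edges hfp⟩⟩
  obtain ⟨x, hxc, hx, hempty⟩ :=
    p.exists_mem_support_mem_erase_mem_support_takeUntil_eq_empty _ hmeet
  have hfirst : ∀ z ∈ (p.takeUntil x hx).support, z ∈ c.support → z = x := by
    intro z hz hzc
    by_contra hne
    exact Finset.filter_eq_empty_iff.mp hempty
      (Finset.mem_erase.mpr ⟨hne, List.mem_toFinset.mpr hzc⟩) hz
  refine ⟨x, List.mem_toFinset.mp hxc, hx, hfirst, ?_⟩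
  rw [← p.take_spec hx, edges_append, List.mem_append] at hfp
  exact hfp.resolve_left fun hf => disjoint_edges_of_forall_mem_support_eq hfirst hf hfc

structure IsEar {x y w : V} (q : G.Walk x y) (c : G.Walk w w) : Prop where
  isPath : q.IsPath
  ne : x ≠ y
  start_mem : x ∈ c.support
  end_mem : y ∈ c.support
  eq_or_eq_of_mem : ∀ z ∈ q.support, z ∈ c.support → z = x ∨ z = y
  disjoint_edges : q.edges.Disjoint c.edges

theorem IsCycle.exists_isCycle_of_isEar {w x y : V} {c : G.Walk w w} (hc : c.IsCycle)
    {q : G.Walk x y} (hq : q.IsEar c) {e g : Sym2 V} (he : e ∈ q.edges) (hg : g ∈ c.edges) :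
    ∃ (u : V) (d : G.Walk u u), d.IsCycle ∧ e ∈ d.edges ∧ g ∈ d.edges := by
  classical
  set c' := c.rotate x hq.start_mem
  have hc' : c'.IsCycle := hc.rotate hq.start_mem
  have hmemS : ∀ z, z ∈ c'.support ↔ z ∈ c.support := fun z => mem_support_rotate_iff ..
  have hmemE : ∀ h, h ∈ c'.edges ↔ h ∈ c.edges := fun h => (rotate_edges ..).mem_iff
  have hy : y ∈ c'.support := (hmemS y).mpr hq.end_mem
  set a₁ := c'.takeUntil y hy
  set a₂ := c'.dropUntil y hy
  have hspec : a₁.append a₂ = c' := take_spec c' hy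
  rw [← hspec] at hc'
  have ha₁ : a₁.IsPath := hc'.isPath_of_append_left (not_nil_of_ne hq.ne.symm)
  have ha₂ : a₂.IsPath := hc'.isPath_of_append_right (not_nil_of_ne hq.ne)
  have hsupp : ∀ z, z ∈ a₁.support ∨ z ∈ a₂.support → z ∈ c.support := by
    intro z hz
    rwa [← hmemS, ← hspec, mem_support_append_iff]
  have hedges : ∀ h, h ∈ a₁.edges ∨ h ∈ a₂.edges → h ∈ c.edges := by
    intro h hh
    rwa [← hmemE, ← hspec, edges_append, List.mem_append]
  have hg' : g ∈ a₁.edges ∨ g ∈ a₂.edges := by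
    rw [← List.mem_append, ← edges_append, hspec, hmemE]
    exact hg
  rcases hg' with hg₁ | hg₂
  · refine ⟨x, a₁.append q.reverse, ha₁.isCycle_append_of_disjoint hq.isPath.reverse hq.ne
      (fun z hz₁ hzq => ?_) (fun h h₁ hq' => ?_), by simp [he], by simp [hg₁]⟩
    · rw [support_reverse, List.mem_reverse] at hzq
      exact hq.eq_or_eq_of_mem z hzq (hsupp z (Or.inl hz₁))
    · rw [edges_reverse, List.mem_reverse] at hq'
      exact hq.disjoint_edges hq' (hedges h (Or.inl h₁))
  · refine ⟨x, q.append a₂, hq.isPath.isCycle_append_of_disjoint ha₂ hq.ne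
      (fun z hzq hz₂ => hq.eq_or_eq_of_mem z hzq (hsupp z (Or.inr hz₂)))
      (fun h hq' h₂ => hq.disjoint_edges hq' (hedges h (Or.inr h₂))), by simp [he],
      by simp [hg₂]⟩

lemma mem_edges_tail_of_ne {u v : V} {p : G.Walk u v} (hp : ¬p.Nil) {f : Sym2 V}
    (hf : f ∈ p.edges) (hne : f ≠ s(u, p.snd)) : f ∈ p.tail.edges := by
  rw [← p.cons_tail_eq hp, edges_cons, List.mem_cons] at hf
  exact hf.resolve_left hne

theorem IsCycle.exists_isPath_of_mem_edges {u a b : V} {c : G.Walk u u} (hc : c.IsCycle)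
    (he : s(a, b) ∈ c.edges) :
    ∃ p : G.Walk b a, p.IsPath ∧ ∀ f ∈ c.edges, f ≠ s(a, b) → f ∈ p.edges := by
  classical
  have ha : a ∈ c.support := c.fst_mem_support_of_mem_edges he
  set d := c.rotate a ha
  have hd : d.IsCycle := hc.rotate ha
  have hmem : ∀ f, f ∈ d.edges ↔ f ∈ c.edges := fun f => (rotate_edges c a ha).mem_iff
  have hb : b ∈ d.toSubgraph.neighborSet a := by
    rw [Subgraph.mem_neighborSet, ← Subgraph.mem_edgeSet, mem_edges_toSubgraph, hmem]
    exact he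
  rw [hd.neighborSet_toSubgraph_endpoint, Set.mem_insert_iff, Set.mem_singleton_iff] at hb
  rcases hb with rfl | rfl
  · exact ⟨d.tail, hd.isPath_tail, fun f hf hne => mem_edges_tail_of_ne hd.not_nil
      ((hmem f).mpr hf) hne⟩
  · refine ⟨d.reverse.tail.copy d.snd_reverse rfl, by simpa using hd.reverse.isPath_tail,
      fun f hf hne => ?_⟩
    rw [edges_copy]
    refine mem_edges_tail_of_ne hd.reverse.not_nil ?_ (by rwa [snd_reverse])
    rw [edges_reverse, List.mem_reverse, hmem]
    exact hf

theorem exists_isEar_of_isPath {a b w : V} {c : G.Walk w w} (hab : G.Adj a b)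
    (habc : s(a, b) ∉ c.edges) {p : G.Walk b a} (hp : p.IsPath) {f : Sym2 V}
    (hfp : f ∈ p.edges) (hfc : f ∈ c.edges) :
    ∃ (x y : V) (q : G.Walk x y), q.IsEar c ∧ s(a, b) ∈ q.edges := by
  classical
  -- `x` is the first vertex of `c` on `p`, `y` the first one on the way back from `a`;
  -- the ear is `y ⟶ a ⟶ b ⟶ x`.
  obtain ⟨x, hxc, hx, hp₁c, hfp₂⟩ := exists_split_at_first_mem_support hfp hfc
  set p₁ := p.takeUntil x hx
  set p₂ := p.dropUntil x hx
  have hp₁₂ : (p₁.append p₂).IsPath := (p.take_spec hx).symm ▸ hp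
  obtain ⟨hp₁, hp₂, hp₁p₂⟩ := isPath_append_iff.mp hp₁₂
  obtain ⟨y, hyc, hy, hr₁c, hfr₂⟩ :=
    exists_split_at_first_mem_support (p := p₂.reverse) (by simpa using hfp₂) hfc
  set r₁ := p₂.reverse.takeUntil y hy
  have hr₁ : r₁.IsPath := hp₂.reverse.takeUntil hy
  have hyx : y ≠ x := fun h => by
    subst h
    simp [edges_eq_nil.mpr (isPath_iff_nil.mp (hp₂.reverse.dropUntil hy))] at hfr₂
  have hxa : x ≠ a := fun h => by
    subst h
    simp [edges_eq_nil.mpr (isPath_iff_nil.mp hp₂)] at hfp₂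
  have hr₁p₂ : ∀ z ∈ r₁.support, z ∈ p₂.support := fun z hz => by
    simpa using p₂.reverse.support_takeUntil_subset_support hy hz
  have hap₁ : a ∉ p₁.support := endpoint_notMem_support_takeUntil hp hx hxa.symm
  refine ⟨y, x, r₁.reverse.append (cons hab p₁), ⟨?_, hyx, hyc, hxc, ?_, ?_⟩, by simp⟩
  · refine isPath_append_iff.mpr ⟨hr₁.reverse, hp₁.cons hap₁, fun z hz hz' => ?_⟩
    rw [support_reverse, List.mem_reverse] at hz
    rw [support_cons, List.mem_cons] at hz'
    refine hz'.resolve_right fun hzp₁ => hyx ?_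
    obtain rfl := hp₁p₂ z hzp₁ (hr₁p₂ z hz)
    exact (hr₁c z hz hxc).symm
  · intro z hz hzc
    simp only [support_append, support_reverse, support_cons, List.mem_append, List.mem_reverse,
      List.tail_cons] at hz
    rcases hz with hz | hz
    · exact Or.inl (hr₁c z hz hzc)
    · exact Or.inr (hp₁c z hz hzc)
  · intro h hq hc
    simp only [edges_append, edges_reverse, edges_cons, List.mem_append, List.mem_reverse,
      List.mem_cons] at hq
    rcases hq with hq | rfl | hq
    · exact disjoint_edges_of_forall_mem_support_eq hr₁c hq hc
    · exact habc hc
    · exact disjoint_edges_of_forall_mem_support_eq hp₁c hq hc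

end SimpleGraph.Walk

open SimpleGraph Walk

theorem stmt_13_general {V : Type*} (G : SimpleGraph V) (e f g : Sym2 V)
    (h1 : ∃ (w : V) (c : G.Walk w w), c.IsCycle ∧ e ∈ c.edges ∧ f ∈ c.edges)
    (h2 : ∃ (w : V) (c : G.Walk w w), c.IsCycle ∧ f ∈ c.edges ∧ g ∈ c.edges) :
    ∃ (w : V) (c : G.Walk w w), c.IsCycle ∧ e ∈ c.edges ∧ g ∈ c.edges := by
  obtain ⟨u, c₁, hc₁, he₁, hf₁⟩ := h1
  obtain ⟨w, c₂, hc₂, hf₂, hg₂⟩ := h2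
  by_cases he₂ : e ∈ c₂.edges
  · exact ⟨w, c₂, hc₂, he₂, hg₂⟩
  induction e using Sym2.ind with
  | _ a b =>
    obtain ⟨p, hp, hc₁p⟩ := hc₁.exists_isPath_of_mem_edges he₁
    have hfp : f ∈ p.edges := hc₁p f hf₁ fun h => he₂ (h ▸ hf₂)
    obtain ⟨x, y, q, hq, heq⟩ :=
      exists_isEar_of_isPath (c₁.adj_of_mem_edges he₁) he₂ hp hfp hf₂
    exact hc₂.exists_isCycle_of_isEar hq heq hg₂

/-- Let `e`, `f`, `g` be edges of a simple graph `G`.  If some cycle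
of `G` contains both `e` and `f`, and some cycle of `G` contains both `f` and `g`, then
some cycle of `G` contains both `e` and `g`. -/
theorem stmt_13 {V : Type*} (G : SimpleGraph V) (e f g : Sym2 V)
    (he : e ∈ G.edgeSet) (hf : f ∈ G.edgeSet) (hg : g ∈ G.edgeSet)
    (h1 : ∃ (w : V) (c : G.Walk w w), c.IsCycle ∧ e ∈ c.edges ∧ f ∈ c.edges)
    (h2 : ∃ (w : V) (c : G.Walk w w), c.IsCycle ∧ f ∈ c.edges ∧ g ∈ c.edges) :
    ∃ (w : V) (c : G.Walk w w), c.IsCycle ∧ e ∈ c.edges ∧ g ∈ c.edges :=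
  stmt_13_general G e f g h1 h2
end
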